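/- For the tribonacci position sequences A and B (positions of 1 and 0 in the infinite tribonacci word), one has A(A(k)+1) = 2(A(k) + B(k)) + k + 6 and A(A(k)) = A(A(k)+1) − 3 for all k ≥ 0. -/

import Mathlib

/-!
Since `t` is the fixed point of `σ`, it is the concatenation of the blocks `σ(t n)`, and
block `n` starts at `s n = blockStart n = |σ(t₀ ⋯ tₙ₋₁)| = n + #₀ n + #₁ n`, where `#ₐ n`
counts the letters `a` among `t₀, …, tₙ₋₁`. Every block begins with `0` and `σ(0) = 01`, so `B = s` and `A = s ∘ s + 1`.
As `#₀ (s n) = n` and `#₁ (s n) = #₀ n`, this gives `A n = 2n + 2 #₀ n + #₁ n + 1`. At `n = A k`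
the counts are `#₀ = B k + 1` and `#₁ = k`, and `t (A k) = 1` raises `#₁` by one at `A k + 1`.
-/

/-- The tribonacci substitution on letters: 0 ↦ 01, 1 ↦ 02, 2 ↦ 0. -/
def sigmaW : ℕ → List ℕ
  | 0 => [0, 1]
  | 1 => [0, 2]
  | _ => [0]

/-- The substitution extended to words (concatenation homomorphism). -/
def sigmaL (w : List ℕ) : List ℕ := w.flatMap sigmaW

/-- The infinite tribonacci word t = 0,1,0,2,0,1,0,0,1,0,2,...,
the fixed point of the substitution starting from 0. -/
def t (n : ℕ) : ℕ := (sigmaL^[n + 1] [0]).getD n 0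

/-- A(n): position of the (n+1)-st occurrence of the letter 1 in t. -/
noncomputable def A (n : ℕ) : ℕ := Nat.nth (fun k => t k = 1) n

/-- B(n): position of the (n+1)-st occurrence of the letter 0 in t. -/
noncomputable def B (n : ℕ) : ℕ := Nat.nth (fun k => t k = 0) n

/-- C(n): position of the (n+1)-st occurrence of the letter 2 in t. -/
noncomputable def C (n : ℕ) : ℕ := Nat.nth (fun k => t k = 2) n

def tribWord (n : ℕ) : List ℕ := sigmaL^[n] [0]

def tPrefix (n : ℕ) : List ℕ := (List.range n).map t

def blockStart (n : ℕ) : ℕ := (sigmaL (tPrefix n)).length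

lemma sigmaL_append (u v : List ℕ) : sigmaL (u ++ v) = sigmaL u ++ sigmaL v := by
  simp [sigmaL]

lemma sigmaL_cons (a : ℕ) (w : List ℕ) : sigmaL (a :: w) = sigmaW a ++ sigmaL w := by
  simp [sigmaL]

lemma length_sigmaL (w : List ℕ) :
    (sigmaL w).length = w.length + w.count 0 + w.count 1 := by
  induction w with
  | nil => rfl
  | cons a w ih =>
    rcases a with _ | _ | a <;> simp [sigmaL_cons, sigmaW, ih] <;> omega

lemma count_zero_sigmaL (w : List ℕ) : (sigmaL w).count 0 = w.length := by
  induction w with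
  | nil => rfl
  | cons a w ih => rcases a with _ | _ | a <;> simp [sigmaL_cons, sigmaW, ih]

lemma count_one_sigmaL (w : List ℕ) : (sigmaL w).count 1 = w.count 0 := by
  induction w with
  | nil => rfl
  | cons a w ih => rcases a with _ | _ | a <;> simp [sigmaL_cons, sigmaW, ih]

lemma tribWord_succ (n : ℕ) : tribWord (n + 1) = sigmaL (tribWord n) :=
  Function.iterate_succ_apply' _ _ _

lemma tribWord_prefix_succ (n : ℕ) : tribWord n <+: tribWord (n + 1) := by
  induction n with
  | zero => exact ⟨[1], rfl⟩
  | succ n ih =>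
    rw [tribWord_succ] at ih
    rw [tribWord_succ (n + 1), tribWord_succ n]
    exact ih.flatMap sigmaW

lemma tribWord_prefix {m n : ℕ} (h : m ≤ n) : tribWord m <+: tribWord n := by
  induction h with
  | refl => exact List.prefix_refl _
  | step _ ih => exact ih.trans (tribWord_prefix_succ _)

lemma lt_length_tribWord (n : ℕ) : n < (tribWord n).length := by
  induction n with
  | zero => simp [tribWord]
  | succ n ih =>
    have hzero : 0 ∈ tribWord n := (tribWord_prefix (Nat.zero_le n)).subset (by simp [tribWord])
    have := List.count_pos_iff.mpr hzero
    rw [tribWord_succ, length_sigmaL]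
    omega

lemma getElem_tribWord {m i : ℕ} (h : i < (tribWord m).length) : (tribWord m)[i] = t i := by
  have hi : i < (tribWord (i + 1)).length := (lt_length_tribWord (i + 1)).trans' (by omega)
  rw [t, ← tribWord, List.getD_eq_getElem _ _ hi]
  rcases le_total m (i + 1) with hm | hm
  · exact (tribWord_prefix hm).getElem h
  · exact ((tribWord_prefix hm).getElem hi).symm

lemma tPrefix_succ (n : ℕ) : tPrefix (n + 1) = tPrefix n ++ [t n] := by
  simp [tPrefix, List.range_succ]

@[simp]
lemma length_tPrefix (n : ℕ) : (tPrefix n).length = n := by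
  simp [tPrefix]

lemma eq_tPrefix_of_prefix {u : List ℕ} {m : ℕ} (h : u <+: tPrefix m) : u = tPrefix u.length := by
  rw [List.prefix_iff_eq_take.mp h, tPrefix, ← List.map_take, List.take_range, tPrefix]
  simp

lemma tPrefix_prefix {m n : ℕ} (h : m ≤ n) : tPrefix m <+: tPrefix n := by
  have htake : (tPrefix n).take m = tPrefix m := by
    simp [tPrefix, ← List.map_take, Nat.min_eq_left h]
  exact htake ▸ List.take_prefix _ _

lemma tribWord_eq_tPrefix (m : ℕ) : tribWord m = tPrefix (tribWord m).length :=
  List.ext_getElem (by simp [tPrefix]) fun i hi _ => by simp [tPrefix, getElem_tribWord hi]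

lemma sigmaL_tPrefix (n : ℕ) : sigmaL (tPrefix n) = tPrefix (blockStart n) := by
  have hn : tPrefix n <+: tribWord n :=
    tribWord_eq_tPrefix n ▸ tPrefix_prefix (lt_length_tribWord n).le
  have hsucc : sigmaL (tPrefix n) <+: tPrefix (tribWord (n + 1)).length := by
    rw [← tribWord_eq_tPrefix, tribWord_succ]
    exact hn.flatMap sigmaW
  exact eq_tPrefix_of_prefix hsucc

lemma count_eq_count_tPrefix (a n : ℕ) : Nat.count (t · = a) n = (tPrefix n).count a := by
  induction n with
  | zero => rfl
  | succ n ih =>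
    rw [Nat.count_succ, ih, tPrefix_succ, List.count_append, List.count_singleton]
    simp only [beq_iff_eq]

lemma blockStart_eq (n : ℕ) :
    blockStart n = n + Nat.count (t · = 0) n + Nat.count (t · = 1) n := by
  rw [blockStart, length_sigmaL, length_tPrefix, count_eq_count_tPrefix, count_eq_count_tPrefix]

lemma count_zero_blockStart (n : ℕ) : Nat.count (t · = 0) (blockStart n) = n := by
  rw [count_eq_count_tPrefix, ← sigmaL_tPrefix, count_zero_sigmaL, length_tPrefix]

lemma count_one_blockStart (n : ℕ) :
    Nat.count (t · = 1) (blockStart n) = Nat.count (t · = 0) n := by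
  rw [count_eq_count_tPrefix, ← sigmaL_tPrefix, count_one_sigmaL, count_eq_count_tPrefix]

lemma t_blockStart_add {n i : ℕ} (hi : i < (sigmaW (t n)).length) :
    t (blockStart n + i) = (sigmaW (t n))[i] := by
  have hblock : tPrefix (blockStart (n + 1)) = tPrefix (blockStart n) ++ sigmaW (t n) := by
    rw [← sigmaL_tPrefix, ← sigmaL_tPrefix, tPrefix_succ, sigmaL_append]
    simp [sigmaL]
  have hlen : blockStart (n + 1) = blockStart n + (sigmaW (t n)).length := by
    simpa using congrArg List.length hblock
  have h := congrArg (·[blockStart n + i]?) hblock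
  simpa [tPrefix, List.getElem?_append_right, hlen, hi] using h

lemma t_blockStart (n : ℕ) : t (blockStart n) = 0 := by
  have h := @t_blockStart_add n 0
  generalize t n = a at h
  rcases a with _ | _ | a <;> simpa [sigmaW] using h

lemma t_blockStart_add_one {n : ℕ} (h : t n = 0) : t (blockStart n + 1) = 1 := by
  simpa [h, sigmaW] using t_blockStart_add (n := n) (i := 1) (by simp [h, sigmaW])

lemma B_eq_blockStart (n : ℕ) : B n = blockStart n := by
  have h := Nat.nth_count (p := (t · = 0)) (t_blockStart n)
  rwa [count_zero_blockStart] at h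

lemma A_eq_blockStart (n : ℕ) : A n = blockStart (blockStart n) + 1 := by
  have hcount : Nat.count (t · = 1) (blockStart (blockStart n) + 1) = n := by
    simp [Nat.count_succ, count_one_blockStart, count_zero_blockStart, t_blockStart]
  have h := Nat.nth_count (p := (t · = 1)) (t_blockStart_add_one (t_blockStart n))
  rwa [hcount] at h

lemma A_eq_count (n : ℕ) :
    A n = 2 * n + 2 * Nat.count (t · = 0) n + Nat.count (t · = 1) n + 1 := by
  rw [A_eq_blockStart, blockStart_eq (blockStart n), count_zero_blockStart, count_one_blockStart,
    blockStart_eq]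
  ring

lemma t_A (n : ℕ) : t (A n) = 1 := by
  rw [A_eq_blockStart]
  exact t_blockStart_add_one (t_blockStart n)

lemma count_zero_A (n : ℕ) : Nat.count (t · = 0) (A n) = B n + 1 := by
  simp [A_eq_blockStart, B_eq_blockStart, Nat.count_succ, count_zero_blockStart, t_blockStart]

lemma count_one_A (n : ℕ) : Nat.count (t · = 1) (A n) = n := by
  simp [A_eq_blockStart, Nat.count_succ, count_one_blockStart, count_zero_blockStart, t_blockStart]

/-- A(A(k)+1) = 2(A(k) + B(k)) + k + 6 and A(A(k)) = A(A(k)+1) − 3. -/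
theorem A_comp_A (k : ℕ) :
    A (A k + 1) = 2 * (A k + B k) + k + 6 ∧ A (A k) = A (A k + 1) - 3 := by
  rw [A_eq_count (A k + 1), A_eq_count (A k), Nat.count_succ, Nat.count_succ, count_zero_A,
    count_one_A]
  simp [t_A]
  omega
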